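/- arXiv:2403.06663 — 2 statements merged into one kernel-verified Lean document; each statement's English description precedes it below -/
import Mathlib

section
/- Every inclusion ambiguity of R with respect to ≤ resolves. -/
/-!
Common setting (from the paper "The Anick resolution of the co-unit of the free unitary
quantum group", arXiv:2403.06663):

`k` is a field and `n ≥ 2`.  `S` is the set of `2n²` generators `u∘_{j,i}, u•_{j,i}`,
`(j,i) ∈ {1,…,n}²`, with the involution `*` exchanging `u∘_{j,i}` and `u•_{j,i}`.
Indices are realized `0`-based as elements of `Fin n` (so the index `1` is `fin1 = 0`,
the index `n` is `finN = n-1`, and `σ(i) = n-i+1` is `Fin.rev`).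
-/

namespace UnPlusAnick

/-- A generator: a color (`false` = white `∘`, `true` = black `•`) and a pair of indices. -/
abbrev Gen (n : ℕ) := Bool × Fin n × Fin n

/-- The involution `*` on the generators: it flips the color and keeps the indices. -/
def genStar {n : ℕ} (g : Gen n) : Gen n := (!g.1, g.2)

/-- An `n × n` matrix with entries in the set of generators. -/
abbrev Mat (n : ℕ) := Fin n → Fin n → Gen n

/-- The fundamental matrix `u`, `u_{j,i} = u∘_{j,i}`. -/
def uMat (n : ℕ) : Mat n := fun j i => (false, j, i)

/-- The transpose `vᵀ`. -/
def mT {n : ℕ} (v : Mat n) : Mat n := fun j i => v i j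

/-- The matrix `v^σ`, `(v^σ)_{j,i} = (v_{σ(j),σ(i)})^*`. -/
def mS {n : ℕ} (v : Mat n) : Mat n := fun j i => genStar (v j.rev i.rev)

/-- The matrix `v^δ`, `(v^δ)_{j,i} = (v_{σ(i),σ(j)})^*`; thus `v^δ = (v^σ)ᵀ`. -/
def mD {n : ℕ} (v : Mat n) : Mat n := fun j i => genStar (v i.rev j.rev)

/-- The set `V = {u, uᵀ, u^σ, u^δ}`. -/
def V (n : ℕ) : Set (Mat n) := {uMat n, mT (uMat n), mS (uMat n), mD (uMat n)}

/-- The index `1` of `{1, …, n}`, as the `0`-based element `0` of `Fin n`. -/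
def fin1 (n : ℕ) (hn : 2 ≤ n) : Fin n := ⟨0, by omega⟩

/-- The index `n` of `{1, …, n}`, as the `0`-based element `n - 1` of `Fin n`. -/
def finN (n : ℕ) (hn : 2 ≤ n) : Fin n := ⟨n - 1, by omega⟩

theorem genStar_genStar {n : ℕ} (g : Gen n) : genStar (genStar g) = g := by simp [genStar]

theorem mS_mS {n : ℕ} (v : Mat n) : mS (mS v) = v := by
  funext j i; simp [mS, genStar_genStar]

theorem mD_mD {n : ℕ} (v : Mat n) : mD (mD v) = v := by
  funext j i; simp [mD, genStar_genStar]

theorem mS_mD {n : ℕ} (v : Mat n) : mS (mD v) = mT v := by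
  funext j i; simp [mS, mD, mT, genStar_genStar]

theorem mD_mS {n : ℕ} (v : Mat n) : mD (mS v) = mT v := by
  funext j i; simp [mS, mD, mT, genStar_genStar]

/-- `V` is closed under transposition. -/
theorem V_mT {n : ℕ} {v : Mat n} (hv : v ∈ V n) : mT v ∈ V n := by
  simp only [V, Set.mem_insert_iff, Set.mem_singleton_iff] at hv ⊢
  rcases hv with rfl | rfl | rfl | rfl
  · exact Or.inr (Or.inl rfl)
  · exact Or.inl rfl
  · exact Or.inr (Or.inr (Or.inr rfl))
  · exact Or.inr (Or.inr (Or.inl rfl))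

/-- `V` is closed under `v ↦ v^σ`. -/
theorem V_mS {n : ℕ} {v : Mat n} (hv : v ∈ V n) : mS v ∈ V n := by
  simp only [V, Set.mem_insert_iff, Set.mem_singleton_iff] at hv ⊢
  rcases hv with rfl | rfl | rfl | rfl
  · exact Or.inr (Or.inr (Or.inl rfl))
  · exact Or.inr (Or.inr (Or.inr rfl))
  · exact Or.inl (mS_mS _)
  · exact Or.inr (Or.inl (mS_mD _))

/-- `V` is closed under `v ↦ v^δ`. -/
theorem V_mD {n : ℕ} {v : Mat n} (hv : v ∈ V n) : mD v ∈ V n := by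
  simp only [V, Set.mem_insert_iff, Set.mem_singleton_iff] at hv ⊢
  rcases hv with rfl | rfl | rfl | rfl
  · exact Or.inr (Or.inr (Or.inr rfl))
  · exact Or.inr (Or.inr (Or.inl rfl))
  · exact Or.inr (Or.inl (mD_mS _))
  · exact Or.inl (mD_mD _)

/-! ### Words and the free algebra -/

/-- Words in the generators: the free monoid over the set of generators. -/
abbrev Word (n : ℕ) := FreeMonoid (Gen n)

/-- The free unital associative `k`-algebra on the generators, realized as the monoid algebra
of the free monoid of words; its canonical `k`-basis is the set of words. -/
abbrev FreeAlg (k : Type*) [Field k] (n : ℕ) := MonoidAlgebra k (Word n)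

/-- A word, viewed as a monomial in the free algebra. -/
noncomputable def wd (k : Type*) [Field k] {n : ℕ} (w : Word n) : FreeAlg k n :=
  MonoidAlgebra.of k (Word n) w

/-- The relation `b^v_{j,i} = ∑_{s=1}^{n} v_{j,σ(s)} (v^δ)_{s,σ(i)} − δ_{j,i} · 1`. -/
noncomputable def brel (k : Type*) [Field k] {n : ℕ} (v : Mat n) (j i : Fin n) : FreeAlg k n :=
  (∑ s : Fin n, wd k (FreeMonoid.of (v j s.rev) * FreeMonoid.of (mD v s i.rev)))
    - if j = i then 1 else 0

/-- The set of relations `R = {b^v_{j,i} : v ∈ V, (j,i) ∈ {1,…,n}²}`. -/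
def rels (k : Type*) [Field k] (n : ℕ) : Set (FreeAlg k n) :=
  {x | ∃ v ∈ V n, ∃ j i : Fin n, x = brel k v j i}

/-- `b̃^v = v_{n,n}(v^δ)_{1,1} − ∑_{s=2}^{n} ∑_{t=1}^{n−1} v_{t,σ(s)}(v^δ)_{s,σ(t)} + (n−2)·1`. -/
noncomputable def btil (k : Type*) [Field k] (n : ℕ) (hn : 2 ≤ n) (v : Mat n) : FreeAlg k n :=
  wd k (FreeMonoid.of (v (finN n hn) (finN n hn)) * FreeMonoid.of (mD v (fin1 n hn) (fin1 n hn)))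
    - (∑ s ∈ Finset.univ.filter (fun s : Fin n => s ≠ fin1 n hn),
        ∑ t ∈ Finset.univ.filter (fun t : Fin n => t ≠ finN n hn),
          wd k (FreeMonoid.of (v t s.rev) * FreeMonoid.of (mD v s t.rev)))
    + ((n - 2 : ℕ) : FreeAlg k n)

/-! ### The monomial order and tips -/

/-- The strict order on the generators: every black generator is smaller than every white one;
`u•_{t,s} < u•_{j,i}` iff `(j,i) <` `(t,s)` lexicographically, and `u∘_{t,s} < u∘_{j,i}` iff
`(t,s) < (j,i)` lexicographically. -/
def genLT {n : ℕ} (g h : Gen n) : Prop :=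
  (g.1 = true ∧ h.1 = false) ∨
    (g.1 = true ∧ h.1 = true ∧ toLex h.2 < toLex g.2) ∨
    (g.1 = false ∧ h.1 = false ∧ toLex g.2 < toLex h.2)

/-- The degreewise lexicographic extension of the order on generators to words:
`w ≤ w'` iff `w = w'`, or `w` is shorter than `w'`, or they have the same length and `w`
precedes `w'` lexicographically letter by letter. -/
def wordLE {n : ℕ} (w w' : Word n) : Prop :=
  w = w' ∨ (FreeMonoid.toList w).length < (FreeMonoid.toList w').length ∨
    ((FreeMonoid.toList w).length = (FreeMonoid.toList w').length ∧
      List.Lex genLT (FreeMonoid.toList w) (FreeMonoid.toList w'))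

/-- `IsTip f t`: the word `t` is the `≤`-largest word occurring with nonzero coefficient in
`f`, i.e. `Tip(f) = t`. -/
def IsTip (k : Type*) [Field k] {n : ℕ} (f : FreeAlg k n) (t : Word n) : Prop :=
  f.coeff t ≠ 0 ∧ ∀ w : Word n, f.coeff w ≠ 0 → wordLE w t

/-- `w` divides `w'` (as words in the free monoid). -/
def WDvd {n : ℕ} (w w' : Word n) : Prop := ∃ w₁ w₂ : Word n, w' = w₁ * w * w₂

/-! ### The ideal of relations -/

/-- The two-sided ideal `I` of the free algebra generated by the set of relations `R`. -/
noncomputable def idl (k : Type*) [Field k] (n : ℕ) : TwoSidedIdeal (FreeAlg k n) :=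
  TwoSidedIdeal.span (rels k n)

/-- The set `Tip(I)` of tips of nonzero elements of `I`. -/
def TipSet (k : Type*) [Field k] (n : ℕ) : Set (Word n) :=
  {w | ∃ f : FreeAlg k n, f ∈ idl k n ∧ f ≠ 0 ∧ IsTip k f w}

/-! ### Reductions and ambiguities -/

/-- `φ` is a one-step reduction by `f`: there are fixed words `w₁`, `w₂` such that `φ` maps the
word `w₁ Tip(f) w₂` to `w₁ (Tip(f) − c⁻¹ f) w₂`, where `c` is the leading coefficient of `f`,
and fixes every other word. -/
def IsOneStep (k : Type*) [Field k] {n : ℕ} (f : FreeAlg k n)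
    (φ : FreeAlg k n →ₗ[k] FreeAlg k n) : Prop :=
  f ≠ 0 ∧ ∃ (w₁ w₂ t : Word n), IsTip k f t ∧
    φ (wd k (w₁ * t * w₂)) = wd k w₁ * (wd k t - (f.coeff t)⁻¹ • f) * wd k w₂ ∧
    ∀ w : Word n, w ≠ w₁ * t * w₂ → φ (wd k w) = wd k w

/-- A reduction by a set `G`: a finite composition of one-step reductions by nonzero elements
of `G`. -/
inductive IsReduction (k : Type*) [Field k] {n : ℕ} (G : Set (FreeAlg k n)) :
    (FreeAlg k n →ₗ[k] FreeAlg k n) → Prop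
  | id : IsReduction k G LinearMap.id
  | comp {φ ψ : FreeAlg k n →ₗ[k] FreeAlg k n} {g : FreeAlg k n} (hg : g ∈ G)
      (hφ : IsOneStep k g φ) (hψ : IsReduction k G ψ) : IsReduction k G (φ ∘ₗ ψ)

/-- `(g, g', w₁, w₂)` is an inclusion ambiguity of `G`. -/
def IsInclusionAmbiguity (k : Type*) [Field k] {n : ℕ} (G : Set (FreeAlg k n))
    (g g' : FreeAlg k n) (w₁ w₂ : Word n) : Prop :=
  g ∈ G ∧ g' ∈ G ∧ g ≠ 0 ∧ g' ≠ 0 ∧ g ≠ g' ∧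
    ∃ t t' : Word n, IsTip k g t ∧ IsTip k g' t' ∧ w₁ * t * w₂ = t'

/-- The inclusion ambiguity `(g, g', w₁, w₂)` of `G` resolves. -/
def InclusionAmbiguityResolves (k : Type*) [Field k] {n : ℕ} (G : Set (FreeAlg k n))
    (g g' : FreeAlg k n) (w₁ w₂ : Word n) : Prop :=
  ∀ t t' : Word n, IsTip k g t → IsTip k g' t' →
    ∃ φ₁ φ₂ : FreeAlg k n →ₗ[k] FreeAlg k n, IsReduction k G φ₁ ∧ IsReduction k G φ₂ ∧
      φ₁ (wd k t' - (g'.coeff t')⁻¹ • g') = φ₂ (wd k w₁ * (wd k t - (g.coeff t)⁻¹ • g) * wd k w₂)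

/-- `(g₁, g₂, w₁, w₂)` is an overlap ambiguity of `G`. -/
def IsOverlapAmbiguity (k : Type*) [Field k] {n : ℕ} (G : Set (FreeAlg k n))
    (g₁ g₂ : FreeAlg k n) (w₁ w₂ : Word n) : Prop :=
  g₁ ∈ G ∧ g₂ ∈ G ∧ g₁ ≠ 0 ∧ g₂ ≠ 0 ∧ ¬(w₁ = 1 ∧ w₂ = 1) ∧
    ∃ t₁ t₂ : Word n, IsTip k g₁ t₁ ∧ IsTip k g₂ t₂ ∧ t₁ * w₂ = w₁ * t₂ ∧
      ¬WDvd t₂ w₂ ∧ ¬WDvd t₁ w₁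

/-- The overlap ambiguity `(g₁, g₂, w₁, w₂)` of `G` resolves. -/
def OverlapAmbiguityResolves (k : Type*) [Field k] {n : ℕ} (G : Set (FreeAlg k n))
    (g₁ g₂ : FreeAlg k n) (w₁ w₂ : Word n) : Prop :=
  ∀ t₁ t₂ : Word n, IsTip k g₁ t₁ → IsTip k g₂ t₂ →
    ∃ φ₁ φ₂ : FreeAlg k n →ₗ[k] FreeAlg k n, IsReduction k G φ₁ ∧ IsReduction k G φ₂ ∧
      φ₁ ((wd k t₁ - (g₁.coeff t₁)⁻¹ • g₁) * wd k w₂) = φ₂ (wd k w₁ * (wd k t₂ - (g₂.coeff t₂)⁻¹ • g₂))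

/-! ### Gröbner bases -/

/-- `G` is a Gröbner basis of the two-sided ideal `J` with respect to the order: `G ⊆ J` and
the tip of every nonzero element of `J` is divisible by the tip of some nonzero element
of `G`. -/
def IsGroebner (k : Type*) [Field k] {n : ℕ} (G : Set (FreeAlg k n))
    (J : TwoSidedIdeal (FreeAlg k n)) : Prop :=
  (∀ g ∈ G, g ∈ J) ∧
    ∀ f : FreeAlg k n, f ∈ J → f ≠ 0 → ∀ t : Word n, IsTip k f t →
      ∃ g ∈ G, g ≠ 0 ∧ ∃ tg : Word n, IsTip k g tg ∧ WDvd tg t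

/-- A minimal Gröbner basis: `0 ∉ G` and the tip of no element of `G` divides the tip of a
different element of `G`. -/
def IsMinimalGroebner (k : Type*) [Field k] {n : ℕ} (G : Set (FreeAlg k n))
    (J : TwoSidedIdeal (FreeAlg k n)) : Prop :=
  IsGroebner k G J ∧ (0 : FreeAlg k n) ∉ G ∧
    ∀ g ∈ G, ∀ g' ∈ G, g ≠ g' → ∀ t t' : Word n, IsTip k g t → IsTip k g' t' → ¬WDvd t t'

/-- A reduced Gröbner basis: minimal, every element has leading coefficient `1`, and the tip of
no element of `G` divides a word occurring with nonzero coefficient in a different element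
of `G`. -/
def IsReducedGroebner (k : Type*) [Field k] {n : ℕ} (G : Set (FreeAlg k n))
    (J : TwoSidedIdeal (FreeAlg k n)) : Prop :=
  IsMinimalGroebner k G J ∧ (∀ g ∈ G, ∀ t : Word n, IsTip k g t → g.coeff t = 1) ∧
    ∀ g ∈ G, ∀ g' ∈ G, g ≠ g' → ∀ t : Word n, IsTip k g t →
      ∀ w : Word n, g'.coeff w ≠ 0 → ¬WDvd t w

/-! ### Monoidal ideals -/

/-- A monoidal ideal of the free monoid of words: a set of words containing all multiples of
its elements. -/
def IsMonIdeal {n : ℕ} (M : Set (Word n)) : Prop :=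
  ∀ w ∈ M, ∀ w₁ w₂ : Word n, w₁ * w * w₂ ∈ M

/-- `N` generates `M` as a monoidal ideal: `M` is the smallest monoidal ideal containing `N`. -/
def GeneratesMonIdeal {n : ℕ} (N M : Set (Word n)) : Prop :=
  IsMonIdeal M ∧ N ⊆ M ∧ ∀ M' : Set (Word n), IsMonIdeal M' → N ⊆ M' → M ⊆ M'

/-! ### Chain words -/

/-- `v^{[ℓ]}`: equal to `v` for odd `ℓ` and to `v^δ` for even `ℓ`. -/
def pw {n : ℕ} (l : ℕ) (v : Mat n) : Mat n := if l % 2 = 1 then v else mD v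

/-- The word `v^{(ℓ)}_{j,i}` (for `ℓ ≥ 1`). -/
def chainWord (n : ℕ) (hn : 2 ≤ n) (v : Mat n) (l : ℕ) (j i : Fin n) : Word n :=
  if l = 1 then FreeMonoid.of (v j i.rev)
  else if l % 2 = 0 then
    FreeMonoid.of (v j (finN n hn)) *
      (FreeMonoid.of (mD v (fin1 n hn) (finN n hn)) *
          FreeMonoid.of (v (fin1 n hn) (finN n hn))) ^ ((l - 2) / 2) *
      FreeMonoid.of (mD v (fin1 n hn) i.rev)
  else
    FreeMonoid.of (v j (finN n hn)) *
      (FreeMonoid.of (mD v (fin1 n hn) (finN n hn)) *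
          FreeMonoid.of (v (fin1 n hn) (finN n hn))) ^ ((l - 3) / 2) *
      FreeMonoid.of (mD v (fin1 n hn) (finN n hn)) * FreeMonoid.of (v (fin1 n hn) i.rev)

/-- The set `C_ℓ = {v^{(ℓ)}_{j,i} : v ∈ V, (j,i) ∈ {1,…,n}²}` of `ℓ`-chains. -/
def Cset (n : ℕ) (hn : 2 ≤ n) (l : ℕ) : Set (Word n) :=
  {w | ∃ v ∈ V n, ∃ j i : Fin n, w = chainWord n hn v l j i}

/-! ### The quotient algebra `A = F/I`, the counit and the modules of the resolution -/

/-- The relation identifying each element of `R` with `0`; the induced ring congruence realizes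
the quotient `A = F/I` by the two-sided ideal `I` generated by `R`. -/
def relR (k : Type*) [Field k] (n : ℕ) : FreeAlg k n → FreeAlg k n → Prop :=
  fun a b => a ∈ rels k n ∧ b = 0

/-- The `k`-algebra `A = F/I`. -/
abbrev Aq (k : Type*) [Field k] (n : ℕ) := RingQuot (relR k n)

/-- The quotient map `F → A = F/I`. -/
noncomputable def pr (k : Type*) [Field k] (n : ℕ) : FreeAlg k n →ₐ[k] Aq k n :=
  RingQuot.mkAlgHom k (relR k n)

/-- The class `v_{j,i} + I ∈ A` of a generator. -/
noncomputable def gen (k : Type*) [Field k] {n : ℕ} (v : Mat n) (j i : Fin n) : Aq k n :=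
  pr k n (wd k (FreeMonoid.of (v j i)))

/-- The ring homomorphism `Aᵐᵒᵖ →+* k` induced by `ε` (using the commutativity of `k`). -/
noncomputable def epsOp (k : Type*) [Field k] (n : ℕ) (ε : Aq k n →ₐ[k] k) :
    (Aq k n)ᵐᵒᵖ →+* k where
  toFun a := ε a.unop
  map_one' := by simp
  map_mul' a b := by simp [mul_comm]
  map_zero' := by simp
  map_add' a b := by simp

/-- The right `A`-module `k_ε`: the field `k` with the right `A`-action induced by `ε`,
realized as a left module over the opposite algebra `Aᵐᵒᵖ`. -/
def KE (k : Type*) [Field k] (n : ℕ) (_ε : Aq k n →ₐ[k] k) : Type _ := k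

instance (k : Type*) [Field k] (n : ℕ) (ε : Aq k n →ₐ[k] k) : AddCommGroup (KE k n ε) :=
  inferInstanceAs (AddCommGroup k)

instance (k : Type*) [Field k] (n : ℕ) (ε : Aq k n →ₐ[k] k) : Module k (KE k n ε) :=
  inferInstanceAs (Module k k)

instance (k : Type*) [Field k] (n : ℕ) (ε : Aq k n →ₐ[k] k) : One (KE k n ε) := ⟨(1 : k)⟩

noncomputable instance (k : Type*) [Field k] (n : ℕ) (ε : Aq k n →ₐ[k] k) :
    Module ((Aq k n)ᵐᵒᵖ) (KE k n ε) :=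
  Module.compHom k (epsOp k n ε)

instance (k : Type*) [Field k] (n : ℕ) (ε : Aq k n →ₐ[k] k) :
    SMulCommClass ((Aq k n)ᵐᵒᵖ) k (KE k n ε) :=
  ⟨fun a c x => by
    show epsOp k n ε a • (c • x) = c • (epsOp k n ε a • x)
    rw [smul_smul, smul_smul, mul_comm]⟩

/-- The free right `A`-module `P_ℓ = kC_ℓ ⊗ₖ A` with basis `C_ℓ` (for `ℓ ≥ 1`), realized as a
left module over the opposite algebra `Aᵐᵒᵖ`. -/
abbrev Pmod (k : Type*) [Field k] (n : ℕ) (hn : 2 ≤ n) (l : ℕ) :=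
  ↥(Cset n hn l) →₀ Aq k n

/-- The element `v^{(ℓ)}_{j,i} ⊗ a` of `P_ℓ`. -/
noncomputable def bas (k : Type*) [Field k] (n : ℕ) (hn : 2 ≤ n) (l : ℕ) (v : Mat n)
    (hv : v ∈ V n) (j i : Fin n) (a : Aq k n) : Pmod k n hn l :=
  Finsupp.single ⟨chainWord n hn v l j i, ⟨v, hv, j, i, rfl⟩⟩ a

/-- Pre-composition with a homomorphism of right `A`-modules, as the `k`-linear map
`Hom_A(N, k_ε) → Hom_A(M, k_ε)`, `g ↦ g ∘ d`. -/
noncomputable def homMap (k : Type*) [Field k] {n : ℕ} (ε : Aq k n →ₐ[k] k) {M N : Type*}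
    [AddCommMonoid M] [AddCommMonoid N] [Module ((Aq k n)ᵐᵒᵖ) M] [Module ((Aq k n)ᵐᵒᵖ) N]
    (d : M →ₗ[(Aq k n)ᵐᵒᵖ] N) :
    (N →ₗ[(Aq k n)ᵐᵒᵖ] KE k n ε) →ₗ[k] (M →ₗ[(Aq k n)ᵐᵒᵖ] KE k n ε) where
  toFun g := g.comp d
  map_add' _ _ := LinearMap.ext fun _ => rfl
  map_smul' _ _ := LinearMap.ext fun _ => rfl

/-- The right-hand side of the defining formula for `d₂` on the basis element
`v^{(2)}_{j,i} ⊗ 1`. -/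
noncomputable def d2RHS (k : Type*) [Field k] (n : ℕ) (hn : 2 ≤ n) (v : Mat n)
    (hv : v ∈ V n) (j i : Fin n) : Pmod k n hn 1 :=
  (∑ s : Fin n, bas k n hn 1 v hv j s (gen k (mD v) s i.rev))
    + bas k n hn 1 (mD v) (V_mD hv) j.rev i 1
    - (if j = finN n hn ∧ i = finN n hn then
        ∑ s ∈ Finset.univ.filter (fun s : Fin n => s ≠ fin1 n hn),
          ((∑ t : Fin n, bas k n hn 1 v hv t s (gen k (mD v) s t.rev))
            + bas k n hn 1 (mD v) (V_mD hv) s s.rev 1)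
      else 0)

/-- The right-hand side of the defining formula for `d_ℓ`, `ℓ ≥ 3`, on the basis element
`v^{(ℓ)}_{j,i} ⊗ 1`. -/
noncomputable def dTail (k : Type*) [Field k] (n : ℕ) (hn : 2 ≤ n) (l : ℕ) (v : Mat n)
    (hv : v ∈ V n) (j i : Fin n) : Pmod k n hn (l - 1) :=
  (∑ s : Fin n, bas k n hn (l - 1) v hv j s (gen k (pw l v) s i.rev))
    + bas k n hn (l - 1) (mD v) (V_mD hv) j.rev i ((-1 : Aq k n) ^ l)
    + (if j = finN n hn then
        ((bas k n hn (l - 1) (mT v) (V_mT hv) (fin1 n hn) (fin1 n hn)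
              (gen k (pw l (mT v)) i.rev (finN n hn))
            + (if l = 3 then
                ∑ s ∈ Finset.univ.filter (fun s : Fin n => s ≠ fin1 n hn ∧ s ≠ finN n hn),
                  bas k n hn (l - 1) (mT v) (V_mT hv) s s (gen k (pw l (mT v)) i.rev (finN n hn))
              else 0))
          - (if i = finN n hn then
              (∑ s : Fin n, bas k n hn (l - 1) (mT v) (V_mT hv) (fin1 n hn) s
                  (gen k (pw l (mT v)) s (finN n hn)))
                + bas k n hn (l - 1) (mS v) (V_mS hv) (finN n hn) (fin1 n hn) ((-1 : Aq k n) ^ l)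
            else 0))
      else 0)
    + (if j = fin1 n hn ∧ i = finN n hn then
        bas k n hn (l - 1) (mS v) (V_mS hv) (fin1 n hn) (fin1 n hn) ((-1 : Aq k n) ^ l)
          + (if l = 3 then
              ∑ s ∈ Finset.univ.filter (fun s : Fin n => s ≠ fin1 n hn ∧ s ≠ finN n hn),
                bas k n hn (l - 1) (mS v) (V_mS hv) s s ((-1 : Aq k n) ^ l)
            else 0)
      else 0)

/-- The system of identities from STATEMENT 14, for a fixed `v ∈ V`. -/
noncomputable def cond14 (k : Type*) [Field k] {n : ℕ} (hn : 2 ≤ n) (ε : Aq k n →ₐ[k] k)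
    (g : Pmod k n hn 1 →ₗ[(Aq k n)ᵐᵒᵖ] KE k n ε) (v : Mat n) (hv : v ∈ V n) : Prop :=
  ∀ j i : Fin n, g (bas k n hn 1 (mS v) (V_mS hv) j i 1) = -g (bas k n hn 1 v hv i j 1)

/-- The system of identities (1)–(4) from STATEMENT 16, for a fixed `v ∈ V`. -/
noncomputable def cond16 (k : Type*) [Field k] {n : ℕ} (hn : 2 ≤ n) (ε : Aq k n →ₐ[k] k)
    (l : ℕ) (g : Pmod k n hn (l - 1) →ₗ[(Aq k n)ᵐᵒᵖ] KE k n ε) (v : Mat n)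
    (hv : v ∈ V n) : Prop :=
  (∀ j i : Fin n, (j, i) ≠ (fin1 n hn, fin1 n hn) →
      g (bas k n hn (l - 1) (mT v) (V_mT hv) j i 1) =
        -(((-1 : k) ^ l) • g (bas k n hn (l - 1) (mS v) (V_mS hv) j.rev i.rev 1))
          - (if j = finN n hn ∧ i = finN n hn then
              g (bas k n hn (l - 1) v hv (fin1 n hn) (fin1 n hn) 1)
                + (if l = 3 then
                    ∑ s ∈ Finset.univ.filter (fun s : Fin n => s ≠ fin1 n hn ∧ s ≠ finN n hn),
                      g (bas k n hn (l - 1) v hv s s 1)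
                  else 0)
            else 0)) ∧
  (∀ j i : Fin n, (j, i) ≠ (fin1 n hn, fin1 n hn) →
      g (bas k n hn (l - 1) (mD v) (V_mD hv) j i 1) =
        -(((-1 : k) ^ l) • g (bas k n hn (l - 1) v hv j.rev i.rev 1))
          - (if j = finN n hn ∧ i = finN n hn then
              g (bas k n hn (l - 1) (mS v) (V_mS hv) (fin1 n hn) (fin1 n hn) 1)
                + (if l = 3 then
                    ∑ s ∈ Finset.univ.filter (fun s : Fin n => s ≠ fin1 n hn ∧ s ≠ finN n hn),
                      g (bas k n hn (l - 1) (mS v) (V_mS hv) s s 1)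
                  else 0)
            else 0)) ∧
  (g (bas k n hn (l - 1) (mD v) (V_mD hv) (fin1 n hn) (fin1 n hn) 1) =
      -(((-1 : k) ^ l) • g (bas k n hn (l - 1) (mT v) (V_mT hv) (fin1 n hn) (fin1 n hn) 1))
        - ((-1 : k) ^ l) • g (bas k n hn (l - 1) v hv (finN n hn) (finN n hn) 1)
        + (if l = 3 then
            ∑ s ∈ Finset.univ.filter (fun s : Fin n => s ≠ fin1 n hn ∧ s ≠ finN n hn),
              g (bas k n hn (l - 1) (mS v) (V_mS hv) s s 1)
          else 0)) ∧
  (g (bas k n hn (l - 1) (mS v) (V_mS hv) (finN n hn) (finN n hn) 1) =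
      -(if l = 3 then
          ∑ s ∈ Finset.univ.filter (fun s : Fin n => s ≠ fin1 n hn ∧ s ≠ finN n hn),
            g (bas k n hn (l - 1) (mS v) (V_mS hv) s s 1)
        else 0)
        + ((-1 : k) ^ l) • (g (bas k n hn (l - 1) v hv (finN n hn) (finN n hn) 1)
            + (if l = 3 then
                ∑ s ∈ Finset.univ.filter (fun s : Fin n => s ≠ fin1 n hn ∧ s ≠ finN n hn),
                  g (bas k n hn (l - 1) v hv s s 1)
              else 0)))

/-!
Every `b^v_{j,i}` has leading coefficient `1` and tip `v_{j,n} (v^δ)_{1,σ(i)}`, a word of length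
two; hence an inclusion ambiguity is an equality of two tips, and the only such equality between
distinct relations is `Tip(b^v_{n,n}) = Tip(b^{vᵀ}_{n,n})`. The words
`(vᵀ)_{n,σ(s)} ((vᵀ)^δ)_{s,1}` of `b^{vᵀ}_{n,n}` are the tips of the diagonal relations
`b^v_{σ(s),σ(s)}`; reducing them all turns both `Tip − b^{vᵀ}_{n,n}` and, symmetrically,
`Tip − b^v_{n,n}` into `1 − (n − 1) + ∑_{s,s' ≥ 2} v_{σ(s),σ(s')} (v^δ)_{s',s}`, a double sum
that transposition only re-indexes by swapping `s` and `s'`.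
-/

end UnPlusAnick

theorem FreeMonoid.eq_one_of_mul_mul_eq {α : Type*} {w₁ w₂ t t' : FreeMonoid α}
    (h : w₁ * t * w₂ = t') (hl : t.length = t'.length) : w₁ = 1 ∧ w₂ = 1 := by
  have := congrArg FreeMonoid.length h
  simp only [FreeMonoid.length_mul] at this
  exact ⟨FreeMonoid.length_eq_zero.mp (by omega), FreeMonoid.length_eq_zero.mp (by omega)⟩

theorem FreeMonoid.of_mul_of_inj {α : Type*} {a b a' b' : α}
    (h : FreeMonoid.of a * FreeMonoid.of b = FreeMonoid.of a' * FreeMonoid.of b') :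
    a = a' ∧ b = b' := by
  simpa using congrArg FreeMonoid.toList h

namespace UnPlusAnick

noncomputable section Reductions

variable {k : Type*} [Field k] {n : ℕ}

open scoped Classical

theorem genLT_asymm {g h : Gen n} (hgh : genLT g h) : ¬genLT h g := by
  rcases hgh with ⟨e1, e2⟩ | ⟨e1, e2, e3⟩ | ⟨e1, e2, e3⟩ <;>
    rintro (⟨f1, f2⟩ | ⟨f1, f2, f3⟩ | ⟨f1, f2, f3⟩) <;> simp_all <;> exact lt_asymm e3 f3

instance : Std.Asymm (genLT (n := n)) := ⟨fun _ _ => genLT_asymm⟩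

theorem wordLE_antisymm {w w' : Word n} (h : wordLE w w') (h' : wordLE w' w) : w = w' := by
  rcases h with rfl | hlt | ⟨hl, hlex⟩
  · rfl
  · rcases h' with rfl | hlt' | ⟨hl', -⟩ <;> first | rfl | omega
  · rcases h' with rfl | hlt' | ⟨-, hlex'⟩
    · rfl
    · omega
    · exact absurd hlex' (Std.Asymm.asymm _ _ hlex)

theorem IsTip.unique {f : FreeAlg k n} {t t' : Word n} (h : IsTip k f t) (h' : IsTip k f t') :
    t = t' :=
  wordLE_antisymm (h'.2 t h.1) (h.2 t' h'.1)

theorem coeff_wd (w w' : Word n) : (wd k w).coeff w' = if w = w' then 1 else 0 := by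
  rw [wd, MonoidAlgebra.of_apply, MonoidAlgebra.coeff_single, Finsupp.single_apply]

theorem wd_one : wd k (1 : Word n) = 1 := map_one (MonoidAlgebra.of k (Word n))

def reduceStep (f : FreeAlg k n) (t : Word n) : FreeAlg k n →ₗ[k] FreeAlg k n where
  toFun x := x - (x.coeff t * (f.coeff t)⁻¹) • f
  map_add' x y := by
    simp only [MonoidAlgebra.coeff_add, Finsupp.add_apply, add_mul, add_smul]
    abel
  map_smul' c x := by
    simp only [MonoidAlgebra.coeff_smul, Finsupp.smul_apply, smul_eq_mul, mul_assoc, mul_smul,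
      RingHom.id_apply, smul_sub]

theorem reduceStep_apply (f x : FreeAlg k n) (t : Word n) :
    reduceStep f t x = x - (x.coeff t * (f.coeff t)⁻¹) • f := rfl

theorem reduceStep_of_coeff_eq_zero (f : FreeAlg k n) {t : Word n} {x : FreeAlg k n}
    (hx : x.coeff t = 0) : reduceStep f t x = x := by
  simp [reduceStep_apply, hx]

theorem reduceStep_wd_self (f : FreeAlg k n) (t : Word n) :
    reduceStep f t (wd k t) = wd k t - (f.coeff t)⁻¹ • f := by
  simp [reduceStep_apply, coeff_wd]

theorem isOneStep_reduceStep {f : FreeAlg k n} {t : Word n} (hf : f ≠ 0) (ht : IsTip k f t) :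
    IsOneStep k f (reduceStep f t) := by
  refine ⟨hf, 1, 1, t, ht, by rw [one_mul, mul_one, reduceStep_wd_self, wd_one, one_mul, mul_one],
    fun w hw => ?_⟩
  rw [one_mul, mul_one] at hw
  exact reduceStep_of_coeff_eq_zero f (by simp [coeff_wd, hw])

variable {ι : Type*} {f : ι → FreeAlg k n} {t : ι → Word n}

variable (f t) in
def reduceAll : List ι → FreeAlg k n →ₗ[k] FreeAlg k n
  | [] => LinearMap.id
  | r :: l => reduceStep (f r) (t r) ∘ₗ reduceAll l

theorem isReduction_reduceAll {G : Set (FreeAlg k n)} (hG : ∀ r, f r ∈ G) (hf : ∀ r, f r ≠ 0)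
    (ht : ∀ r, IsTip k (f r) (t r)) (l : List ι) : IsReduction k G (reduceAll f t l) := by
  induction l with
  | nil => exact .id
  | cons r l ih => exact .comp (hG r) (isOneStep_reduceStep (hf r) (ht r)) ih

theorem reduceAll_of_coeff_eq_zero {l : List ι} {x : FreeAlg k n}
    (hx : ∀ r ∈ l, x.coeff (t r) = 0) : reduceAll f t l x = x := by
  induction l with
  | nil => rfl
  | cons r l ih =>
    rw [reduceAll, LinearMap.comp_apply, ih fun r' hr' => hx r' (List.mem_cons_of_mem r hr'),
      reduceStep_of_coeff_eq_zero _ (hx r List.mem_cons_self)]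

theorem coeff_tip_sub_eq_zero (ht : Function.Injective t) (hc : ∀ r, (f r).coeff (t r) ≠ 0)
    (hoff : ∀ r r', r ≠ r' → (f r).coeff (t r') = 0) (r r' : ι) :
    (wd k (t r) - ((f r).coeff (t r))⁻¹ • f r).coeff (t r') = 0 := by
  by_cases h : r = r'
  · subst h
    simp [coeff_wd, hc r]
  · simp [coeff_wd, ht.ne h, hoff r r' h]

theorem reduceAll_wd (ht : Function.Injective t) (hc : ∀ r, (f r).coeff (t r) ≠ 0)
    (hoff : ∀ r r', r ≠ r' → (f r).coeff (t r') = 0) {l : List ι} {r : ι} (hr : r ∈ l) :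
    reduceAll f t l (wd k (t r)) = wd k (t r) - ((f r).coeff (t r))⁻¹ • f r := by
  induction l with
  | nil => cases hr
  | cons a l ih =>
    rw [reduceAll, LinearMap.comp_apply]
    by_cases hrl : r ∈ l
    · rw [ih hrl, reduceStep_of_coeff_eq_zero _ (coeff_tip_sub_eq_zero ht hc hoff r a)]
    · obtain rfl : r = a := (List.mem_cons.mp hr).resolve_right hrl
      rw [reduceAll_of_coeff_eq_zero fun r' hr' => ?_, reduceStep_wd_self]
      simp [coeff_wd, ht.ne (fun h : r = r' => hrl (h ▸ hr'))]

end Reductions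

noncomputable section Relations

variable {k : Type*} [Field k] {n : ℕ}

open scoped Classical

theorem genStar_injective : Function.Injective (genStar (n := n)) :=
  Function.LeftInverse.injective genStar_genStar

theorem eq_and_eq_of_apply_eq {v : Mat n} (hv : v ∈ V n) {j i j' i' : Fin n}
    (h : v j i = v j' i') : j = j' ∧ i = i' := by
  rcases hv with rfl | rfl | rfl | rfl <;>
    simp only [uMat, mT, mS, mD, genStar, Prod.mk.injEq, Fin.rev_inj] at h <;> tauto

theorem genLT_apply_of_lt {v : Mat n} (hv : v ∈ V n) (j : Fin n) {a b : Fin n} (hab : a < b) :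
    genLT (v j a) (v j b) := by
  have hrev : b.rev < a.rev := Fin.rev_lt_rev.mpr hab
  rcases hv with rfl | rfl | rfl | rfl <;>
    simp [uMat, mT, mS, mD, genStar, genLT, Prod.Lex.lt_iff, hab, hrev]

/- In `Fin (n + 1)` the paper's indices `1` and `n` are `0` and `Fin.last n`, so the tip of
`b^v_{j,i}` will be `brelWord v 0 j i`. -/
def brelWord (v : Mat n) (s j i : Fin n) : Word n :=
  FreeMonoid.of (v j s.rev) * FreeMonoid.of (mD v s i.rev)

theorem brelWord_eq (v : Mat n) (s j i : Fin n) :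
    brelWord v s j i = FreeMonoid.of (v j s.rev) * FreeMonoid.of (genStar (v i s.rev)) := by
  simp [brelWord, mD]

theorem brelWord_mT (v : Mat n) (a b : Fin n) :
    brelWord (mT v) a b.rev b.rev = brelWord v b a.rev a.rev := by
  simp [brelWord_eq, mT]

theorem brelWord_ne_one (v : Mat n) (s j i : Fin n) : brelWord v s j i ≠ 1 := fun h => by
  simpa [brelWord] using congrArg FreeMonoid.length h

theorem brelWord_inj {v : Mat n} (hv : v ∈ V n) {s j i s' j' i' : Fin n}
    (h : brelWord v s j i = brelWord v s' j' i') : s = s' ∧ j = j' ∧ i = i' := by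
  rw [brelWord_eq, brelWord_eq] at h
  obtain ⟨hj, hi⟩ := FreeMonoid.of_mul_of_inj h
  obtain ⟨rfl, hs⟩ := eq_and_eq_of_apply_eq hv hj
  obtain ⟨rfl, -⟩ := eq_and_eq_of_apply_eq hv (genStar_injective hi)
  exact ⟨Fin.rev_inj.mp hs, rfl, rfl⟩

theorem brel_eq_sum_brelWord (v : Mat n) (j i : Fin n) :
    brel k v j i = ∑ s, wd k (brelWord v s j i) - if j = i then 1 else 0 := rfl

theorem coeff_brel (v : Mat n) (j i : Fin n) (w : Word n) :
    (brel k v j i).coeff w =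
      (∑ s, if brelWord v s j i = w then 1 else 0) - if j = i ∧ w = 1 then 1 else 0 := by
  rw [brel_eq_sum_brelWord, MonoidAlgebra.coeff_sub, Finsupp.sub_apply, MonoidAlgebra.coeff_sum,
    Finset.sum_apply']
  simp only [coeff_wd]
  congr 1
  by_cases hji : j = i
  · simp [hji, ← wd_one, coeff_wd, eq_comm]
  · simp [hji]

theorem coeff_brel_brelWord {v : Mat n} (hv : v ∈ V n) (s j i : Fin n) :
    (brel k v j i).coeff (brelWord v s j i) = 1 := by
  rw [coeff_brel, Finset.sum_eq_single_of_mem s (Finset.mem_univ s)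
    fun s' _ hs' => if_neg fun h => hs' (brelWord_inj hv h).1]
  simp [brelWord_ne_one]

theorem coeff_brel_eq_zero (v : Mat n) (j i : Fin n) {w : Word n} (hw : w ≠ 1)
    (hws : ∀ s, brelWord v s j i ≠ w) : (brel k v j i).coeff w = 0 := by
  simp [coeff_brel, hw, hws]

theorem brel_ne_zero {v : Mat n} (hv : v ∈ V n) (j i : Fin n) : brel k v j i ≠ 0 := fun h => by
  simpa [h] using coeff_brel_brelWord (k := k) hv j j i

theorem isTip_brel {v : Mat (n + 1)} (hv : v ∈ V (n + 1)) (j i : Fin (n + 1)) :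
    IsTip k (brel k v j i) (brelWord v 0 j i) := by
  refine ⟨by simp [coeff_brel_brelWord hv], fun w hw => ?_⟩
  by_cases hw1 : w = 1
  · exact Or.inr (Or.inl (by simp [hw1, brelWord]))
  obtain ⟨s, rfl⟩ : ∃ s, brelWord v s j i = w := by
    by_contra! hws
    exact hw (coeff_brel_eq_zero v j i hw1 hws)
  rcases eq_or_ne s 0 with rfl | hs
  · exact Or.inl rfl
  · refine Or.inr (Or.inr ⟨by simp [brelWord], ?_⟩)
    simpa [brelWord] using List.Lex.rel (genLT_apply_of_lt hv j
      (Fin.rev_lt_rev.mpr (Fin.pos_iff_ne_zero.mpr hs)))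

theorem tip_sub_brel {v : Mat (n + 1)} (hv : v ∈ V (n + 1)) (j i : Fin (n + 1)) :
    wd k (brelWord v 0 j i) - ((brel k v j i).coeff (brelWord v 0 j i))⁻¹ • brel k v j i =
      (if j = i then 1 else 0) - ∑ s : Fin n, wd k (brelWord v s.succ j i) := by
  rw [coeff_brel_brelWord hv, inv_one, one_smul, brel_eq_sum_brelWord, Fin.sum_univ_succ]
  abel

end Relations

section Ambiguities

variable {k : Type*} [Field k] {n : ℕ}

theorem apply_last_eq_apply_last {v v' : Mat (n + 1)} (hv : v ∈ V (n + 1))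
    (hv' : v' ∈ V (n + 1)) {j j' : Fin (n + 1)} (h : v j (Fin.last n) = v' j' (Fin.last n)) :
    (v' = v ∧ j' = j) ∨ (v' = mT v ∧ j = Fin.last n ∧ j' = Fin.last n) := by
  rcases hv with rfl | rfl | rfl | rfl <;> rcases hv' with rfl | rfl | rfl | rfl <;>
    simp only [uMat, mT, mS, mD, genStar, Prod.mk.injEq, Fin.rev_inj, Bool.not_false,
      Bool.false_eq_true, Bool.true_eq_false, false_and, true_and, and_true] at h <;>
    first
    | exact Or.inl ⟨rfl, by tauto⟩
    | exact Or.inr ⟨rfl, by tauto⟩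

theorem brelWord_zero_eq_brelWord_zero {v v' : Mat (n + 1)} (hv : v ∈ V (n + 1))
    (hv' : v' ∈ V (n + 1)) {j i j' i' : Fin (n + 1)}
    (h : brelWord v 0 j i = brelWord v' 0 j' i') :
    (v' = v ∧ j' = j ∧ i' = i) ∨
      (v' = mT v ∧ j = Fin.last n ∧ i = Fin.last n ∧ j' = Fin.last n ∧ i' = Fin.last n) := by
  rw [brelWord_eq, brelWord_eq, Fin.rev_zero] at h
  obtain ⟨hj, hi⟩ := FreeMonoid.of_mul_of_inj h
  rcases apply_last_eq_apply_last hv hv' hj with ⟨rfl, rfl⟩ | ⟨rfl, rfl, rfl⟩ <;>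
    rcases apply_last_eq_apply_last hv hv' (genStar_injective hi) with
      ⟨hvv, rfl⟩ | ⟨hvv, rfl, rfl⟩
  · exact Or.inl ⟨rfl, rfl, rfl⟩
  · exact Or.inl ⟨rfl, rfl, rfl⟩
  · exact Or.inl ⟨hvv, rfl, rfl⟩
  · exact Or.inr ⟨rfl, rfl, rfl, rfl, rfl⟩

theorem eq_brel_last_of_isInclusionAmbiguity {g g' : FreeAlg k (n + 1)} {w₁ w₂ : Word (n + 1)}
    (h : IsInclusionAmbiguity k (rels k (n + 1)) g g' w₁ w₂) :
    ∃ v ∈ V (n + 1), g = brel k v (Fin.last n) (Fin.last n) ∧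
      g' = brel k (mT v) (Fin.last n) (Fin.last n) ∧ w₁ = 1 ∧ w₂ = 1 := by
  obtain ⟨⟨v, hv, j, i, rfl⟩, ⟨v', hv', j', i', rfl⟩, -, -, hne, t, t', ht, ht', heq⟩ := h
  obtain rfl := ht.unique (isTip_brel hv j i)
  obtain rfl := ht'.unique (isTip_brel hv' j' i')
  obtain ⟨rfl, rfl⟩ := FreeMonoid.eq_one_of_mul_mul_eq heq (by simp [brelWord])
  rw [one_mul, mul_one] at heq
  rcases brelWord_zero_eq_brelWord_zero hv hv' heq with
    ⟨rfl, rfl, rfl⟩ | ⟨rfl, rfl, rfl, rfl, rfl⟩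
  · exact absurd rfl hne
  · exact ⟨v, hv, rfl, rfl, rfl, rfl⟩

end Ambiguities

noncomputable section Resolution

variable (k : Type*) [Field k] {n : ℕ}

def reduceDiagTips (v : Mat (n + 1)) : FreeAlg k (n + 1) →ₗ[k] FreeAlg k (n + 1) :=
  reduceAll (fun r => brel k v r r) (fun r => brelWord v 0 r r) (List.finRange (n + 1))

variable {k} {v : Mat (n + 1)}

theorem isReduction_reduceDiagTips (hv : v ∈ V (n + 1)) :
    IsReduction k (rels k (n + 1)) (reduceDiagTips k v) :=
  isReduction_reduceAll
    (fun r => show brel k v r r ∈ rels k (n + 1) from ⟨v, hv, r, r, rfl⟩)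
    (fun r => brel_ne_zero hv r r) (fun r => isTip_brel hv r r) _

theorem reduceDiagTips_one : reduceDiagTips k v 1 = 1 :=
  reduceAll_of_coeff_eq_zero fun r _ => by
    rw [← wd_one, coeff_wd, if_neg (brelWord_ne_one v 0 r r).symm]

theorem reduceDiagTips_brelWord (hv : v ∈ V (n + 1)) (r : Fin (n + 1)) :
    reduceDiagTips k v (wd k (brelWord v 0 r r)) =
      1 - ∑ s : Fin n, wd k (brelWord v s.succ r r) := by
  have hinj : Function.Injective fun r => brelWord v 0 r r := fun r r' h =>
    (brelWord_inj hv h).2.1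
  have hoff (r r' : Fin (n + 1)) (hr : r ≠ r') :
      (brel k v r r).coeff (brelWord v 0 r' r') = 0 :=
    coeff_brel_eq_zero v r r (brelWord_ne_one v 0 r' r') fun s h => hr (brelWord_inj hv h).2.1
  rw [reduceDiagTips, reduceAll_wd hinj (fun r => by simp [coeff_brel_brelWord hv]) hoff
    (List.mem_finRange r), tip_sub_brel hv, if_pos rfl]

theorem reduceDiagTips_tip_sub_brel_mT_last (hv : v ∈ V (n + 1)) :
    reduceDiagTips k v
        (wd k (brelWord (mT v) 0 (Fin.last n) (Fin.last n)) -
          ((brel k (mT v) (Fin.last n) (Fin.last n)).coeff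
              (brelWord (mT v) 0 (Fin.last n) (Fin.last n)))⁻¹ •
            brel k (mT v) (Fin.last n) (Fin.last n)) =
      1 - ∑ s : Fin n, (1 - ∑ s' : Fin n, wd k (brelWord v s'.succ s.succ.rev s.succ.rev)) := by
  rw [tip_sub_brel (V_mT hv), if_pos rfl, map_sub, map_sum, reduceDiagTips_one]
  congr 1
  refine Finset.sum_congr rfl fun s _ => ?_
  rw [← Fin.rev_zero, brelWord_mT, reduceDiagTips_brelWord hv]

theorem sum_sum_brelWord_mT (v : Mat (n + 1)) :
    ∑ s : Fin n, ∑ s' : Fin n, wd k (brelWord (mT v) s'.succ s.succ.rev s.succ.rev) =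
      ∑ s : Fin n, ∑ s' : Fin n, wd k (brelWord v s'.succ s.succ.rev s.succ.rev) := by
  rw [Finset.sum_comm]
  simp only [brelWord_mT]

theorem inclusionAmbiguityResolves_brel_last (hv : v ∈ V (n + 1)) :
    InclusionAmbiguityResolves k (rels k (n + 1)) (brel k v (Fin.last n) (Fin.last n))
      (brel k (mT v) (Fin.last n) (Fin.last n)) 1 1 := by
  intro t t' ht ht'
  obtain rfl := ht.unique (isTip_brel hv _ _)
  obtain rfl := ht'.unique (isTip_brel (V_mT hv) _ _)
  refine ⟨reduceDiagTips k v, reduceDiagTips k (mT v), isReduction_reduceDiagTips hv,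
    isReduction_reduceDiagTips (V_mT hv), ?_⟩
  rw [wd_one, one_mul, mul_one]
  calc _ = 1 - ∑ s : Fin n, (1 - ∑ s' : Fin n, wd k (brelWord v s'.succ s.succ.rev s.succ.rev)) :=
        reduceDiagTips_tip_sub_brel_mT_last hv
    _ = 1 - ∑ s : Fin n,
          (1 - ∑ s' : Fin n, wd k (brelWord (mT v) s'.succ s.succ.rev s.succ.rev)) := by
        simp only [Finset.sum_sub_distrib, sum_sum_brelWord_mT]
    _ = _ := (reduceDiagTips_tip_sub_brel_mT_last (V_mT hv)).symm

end Resolution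

theorem statement_3_general (k : Type*) [Field k] (n : ℕ) :
    ∀ (g g' : FreeAlg k n) (w₁ w₂ : Word n),
      IsInclusionAmbiguity k (rels k n) g g' w₁ w₂ →
      InclusionAmbiguityResolves k (rels k n) g g' w₁ w₂ := by
  intro g g' w₁ w₂ h
  cases n with
  | zero =>
    obtain ⟨_, -, j, -⟩ := h.1
    exact j.elim0
  | succ n =>
    obtain ⟨v, hv, rfl, rfl, rfl, rfl⟩ := eq_brel_last_of_isInclusionAmbiguity h
    exact inclusionAmbiguityResolves_brel_last hv

theorem statement_3 (k : Type*) [Field k] (n : ℕ) (hn : 2 ≤ n) :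
    ∀ (g g' : FreeAlg k n) (w₁ w₂ : Word n),
      IsInclusionAmbiguity k (rels k n) g g' w₁ w₂ →
      InclusionAmbiguityResolves k (rels k n) g g' w₁ w₂ :=
  statement_3_general k n

end UnPlusAnick
end

section
/- For all v, w ∈ V, all (j,i), (t,s) ∈ {1,…,n}² and all ℓ ≥ 1, the words w^{(ℓ)}_{t,s} and v^{(ℓ)}_{j,i} of ⟨S⟩ are equal if and only if one of the following holds: (a) w = v and (t,s) = (j,i); (b) ℓ = 1, w = vᵀ and (t,s) = (σ(i),σ(j)); (c) ℓ = 2, w = vᵀ and (t,s) = (n,n) = (j,i). -/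
/-!
Common setting (from the paper "The Anick resolution of the co-unit of the free unitary
quantum group", arXiv:2403.06663):

`k` is a field and `n ≥ 2`.  `S` is the set of `2n²` generators `u∘_{j,i}, u•_{j,i}`,
`(j,i) ∈ {1,…,n}²`, with the involution `*` exchanging `u∘_{j,i}` and `u•_{j,i}`.
Indices are realized `0`-based as elements of `Fin n` (so the index `1` is `fin1 = 0`,
the index `n` is `finN = n-1`, and `σ(i) = n-i+1` is `Fin.rev`).
-/

namespace UnPlusAnick

/-!
The word `v^{(ℓ+1)}_{j,i}` is the letter `v_{j,n}` followed by `(v^δ)^{(ℓ)}_{1,i}`, and `V` is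
closed under `δ`; so the statement follows by induction on `ℓ`, once one knows when two entries
of matrices in `V` coincide: `w_{a,b} = v_{c,d}` only for `w = v` at the same position or for
`w = vᵀ` at the transposed position.  At the step, the coincidence `w = vᵀ` in the tail can
only survive at `ℓ = 1`, and then it forces the position `(n, n)`.
-/

theorem _root_.FreeMonoid.of_mul_eq_of_mul_iff {α : Type*} {a b : α} {x y : FreeMonoid α} :
    FreeMonoid.of a * x = FreeMonoid.of b * y ↔ a = b ∧ x = y := by
  rw [← FreeMonoid.toList.injective.eq_iff, FreeMonoid.toList_of_mul, FreeMonoid.toList_of_mul,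
    List.cons.injEq, FreeMonoid.toList.injective.eq_iff]

section Entries

variable {n : ℕ} {v w : Mat n}

theorem apply_eq_apply_iff_of_mem_V (hv : v ∈ V n) {a b c d : Fin n} :
    v a b = v c d ↔ a = c ∧ b = d := by
  simp only [V, Set.mem_insert_iff, Set.mem_singleton_iff] at hv
  rcases hv with rfl | rfl | rfl | rfl <;>
    simp [uMat, mT, mS, mD, genStar, and_comm]

theorem eq_or_eq_mT_of_apply_eq_apply (hv : v ∈ V n) (hw : w ∈ V n) {a b c d : Fin n}
    (h : w a b = v c d) : w = v ∨ w = mT v := by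
  simp only [V, Set.mem_insert_iff, Set.mem_singleton_iff] at hv hw
  rcases hv with rfl | rfl | rfl | rfl <;> rcases hw with rfl | rfl | rfl | rfl <;>
    first
      | exact Or.inl rfl
      | exact Or.inr rfl
      | simp [uMat, mT, mS, mD, genStar] at h

theorem apply_eq_apply_iff_of_mem_V' (hv : v ∈ V n) (hw : w ∈ V n) {a b c d : Fin n} :
    w a b = v c d ↔ (w = v ∧ a = c ∧ b = d) ∨ (w = mT v ∧ a = d ∧ b = c) := by
  constructor
  · intro h
    rcases eq_or_eq_mT_of_apply_eq_apply hv hw h with rfl | rfl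
    · exact Or.inl ⟨rfl, (apply_eq_apply_iff_of_mem_V hv).mp h⟩
    · obtain ⟨hbc, had⟩ := (apply_eq_apply_iff_of_mem_V hv).mp h
      exact Or.inr ⟨rfl, had, hbc⟩
  · rintro (⟨rfl, rfl, rfl⟩ | ⟨rfl, rfl, rfl⟩) <;> rfl

theorem mD_injective : Function.Injective (mD : Mat n → Mat n) :=
  Function.LeftInverse.injective mD_mD

theorem mT_mD (v : Mat n) : mT (mD v) = mD (mT v) := rfl

end Entries

section ChainWords

variable {n : ℕ} (hn : 2 ≤ n)

theorem rev_fin1 : (fin1 n hn).rev = finN n hn := by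
  ext; simp [fin1, finN, Fin.val_rev]

theorem fin1_ne_finN : fin1 n hn ≠ finN n hn := by
  simp [fin1, finN, Fin.ext_iff]; omega

theorem fin1_eq_rev_iff {i : Fin n} : fin1 n hn = i.rev ↔ i = finN n hn := by
  rw [eq_comm, Fin.rev_eq_iff, rev_fin1]

theorem chainWord_one (v : Mat n) (j i : Fin n) :
    chainWord n hn v 1 j i = FreeMonoid.of (v j i.rev) := by
  simp [chainWord]

theorem chainWord_succ (v : Mat n) {l : ℕ} (hl : 1 ≤ l) (j i : Fin n) :
    chainWord n hn v (l + 1) j i =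
      FreeMonoid.of (v j (finN n hn)) * chainWord n hn (mD v) l (fin1 n hn) i := by
  obtain ⟨m, rfl | rfl⟩ : ∃ m, l = 2 * m + 1 ∨ l = 2 * m + 2 := by
    obtain ⟨m, rfl | rfl⟩ := Nat.even_or_odd' l
    · exact ⟨m - 1, Or.inr (by omega)⟩
    · exact ⟨m, Or.inl rfl⟩
  · rcases m with _ | m
    · simp [chainWord]
    · have hexp : (2 * (m + 1) - 2) / 2 = m := by omega
      simp [chainWord, mD_mD, Nat.add_mod, hexp, pow_succ, mul_assoc, ← mul_pow_mul]
  · simp [chainWord, mD_mD, Nat.add_mod, mul_assoc, ← mul_pow_mul]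

end ChainWords

theorem statement_11 (n : ℕ) (hn : 2 ≤ n) :
    ∀ v ∈ V n, ∀ w ∈ V n, ∀ (t s j i : Fin n) (l : ℕ), 1 ≤ l →
      (chainWord n hn w l t s = chainWord n hn v l j i ↔
        (w = v ∧ t = j ∧ s = i) ∨
          (l = 1 ∧ w = mT v ∧ t = i.rev ∧ s = j.rev) ∨
          (l = 2 ∧ w = mT v ∧ t = finN n hn ∧ s = finN n hn ∧ j = finN n hn ∧
            i = finN n hn)) := by
  intro v hv w hw t s j i l hl
  induction l, hl using Nat.le_induction generalizing v w t s j i with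
  | base =>
    rw [chainWord_one, chainWord_one, FreeMonoid.of_injective.eq_iff,
      apply_eq_apply_iff_of_mem_V' hv hw]
    simp [Fin.rev_eq_iff]
  | succ l hl ih =>
    rw [chainWord_succ hn w hl, chainWord_succ hn v hl, FreeMonoid.of_mul_eq_of_mul_iff,
      apply_eq_apply_iff_of_mem_V' hv hw, ih (mD v) (V_mD hv) (mD w) (V_mD hw), mD_injective.eq_iff,
      mT_mD, mD_injective.eq_iff]
    simp only [fin1_eq_rev_iff, rev_fin1 hn, and_true, true_and]
    constructor
    · rintro ⟨⟨rfl, rfl⟩ | ⟨rfl, rfl, rfl⟩, ⟨hwv, rfl⟩ | ⟨rfl, hwv, rfl, rfl⟩ | ⟨-, -, h1N, -⟩⟩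
      · exact Or.inl ⟨rfl, rfl, rfl⟩
      · exact Or.inl ⟨rfl, rfl, rfl⟩
      · exact absurd h1N (fin1_ne_finN hn)
      · exact Or.inl ⟨hwv, rfl, rfl⟩
      · exact Or.inr (Or.inr ⟨rfl, rfl, rfl, rfl, rfl, rfl⟩)
      · exact absurd h1N (fin1_ne_finN hn)
    · rintro (⟨rfl, rfl, rfl⟩ | ⟨hl1, -⟩ | ⟨hl2, rfl, rfl, rfl, rfl, rfl⟩)
      · exact ⟨Or.inl ⟨rfl, rfl⟩, Or.inl ⟨rfl, rfl⟩⟩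
      · omega
      · obtain rfl : l = 1 := by omega
        exact ⟨Or.inr ⟨rfl, rfl, rfl⟩, Or.inr (Or.inl ⟨rfl, rfl, rfl, rfl⟩)⟩

end UnPlusAnick
end
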